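/- Let (G, G_•) be a filtered group with G_0 = G_1 = G and deg(G_•) = k. Then G together with the cube sets C^n(G_•) is a k-step nilspace: it satisfies the composition axiom, the ergodicity axiom, every corner has a completion, and every (k+1)-corner has a unique completion. -/

import Mathlib

open Finset

/-- Embedding of the discrete cube `{0,1}^n` into `ℤ^n`. -/
def cubeEmb {n : ℕ} (v : Fin n → Bool) : Fin n → ℤ := fun i => if v i then 1 else 0

/-- A discrete-cube morphism: the restriction to `{0,1}^m` of an affine
homomorphism `ℤ^m → ℤ^n`. -/
def IsCubeMorphism {m n : ℕ} (φ : (Fin m → Bool) → (Fin n → Bool)) : Prop :=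
  ∃ (M : (Fin m → ℤ) →+ (Fin n → ℤ)) (t : Fin n → ℤ),
    ∀ v : Fin m → Bool, cubeEmb (φ v) = M (cubeEmb v) + t

/-- A face of `{0,1}^n` of codimension `c`: fix `c` coordinates. -/
def IsFaceOfCodim {n : ℕ} (F : Set (Fin n → Bool)) (c : ℕ) : Prop :=
  ∃ (I : Finset (Fin n)) (x : Fin n → Bool), I.card = c ∧
    F = {v : Fin n → Bool | ∀ i ∈ I, v i = x i}

/-- An `m`-face map into `{0,1}^n`: an injective cube morphism whose image is
an `m`-dimensional face. -/
def IsFaceMap {m n : ℕ} (φ : (Fin m → Bool) → (Fin n → Bool)) : Prop :=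
  IsCubeMorphism φ ∧ Function.Injective φ ∧ IsFaceOfCodim (Set.range φ) (n - m)

/-- The number of coordinates of `v` equal to `1`. -/
def weight {n : ℕ} (v : Fin n → Bool) : ℕ := (Finset.univ.filter fun i => v i = true).card

/-- A (pre)filtration on a group: a decreasing chain of subgroups with
`[G_i, G_j] ⊆ G_{i+j}`. -/
def IsGrpFiltration {G : Type*} [Group G] (Gf : ℕ → Subgroup G) : Prop :=
  (∀ i, Gf (i + 1) ≤ Gf i) ∧
  (∀ i j : ℕ, ∀ x ∈ Gf i, ∀ y ∈ Gf j, x⁻¹ * y⁻¹ * x * y ∈ Gf (i + j))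

open Classical in
/-- The face-group element `g^F`: equal to `g` on `F` and to the identity elsewhere. -/
noncomputable def faceEl {G : Type*} [Group G] {n : ℕ} (F : Set (Fin n → Bool)) (g : G) :
    (Fin n → Bool) → G :=
  fun v => if v ∈ F then g else 1

/-- The Host–Kra cube group `C^n(G_•)`: the subgroup of `G^{{0,1}^n}` generated by
the face groups. -/
noncomputable def hkCubes {G : Type*} [Group G] (Gf : ℕ → Subgroup G) (n : ℕ) :
    Subgroup ((Fin n → Bool) → G) :=
  Subgroup.closure { f | ∃ (c : ℕ) (F : Set (Fin n → Bool)) (g : G),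
    IsFaceOfCodim F c ∧ g ∈ Gf c ∧ f = faceEl F g }

/-- Restriction of a map on `{0,1}^{n+1}` to the lower face `{v : v_j = 0}`,
viewed as a map on `{0,1}^n`. -/
def lowerFaceRestr {X : Type*} {n : ℕ} (q : (Fin (n + 1) → Bool) → X) (j : Fin (n + 1)) :
    (Fin n → Bool) → X :=
  fun v => q (j.insertNth false v)

/-- An `(n+1)`-corner: every restriction to an `n`-face containing `0^{n+1}` is a cube. -/
def IsNSCorner {X : Type*} (C : ∀ n, ((Fin n → Bool) → X) → Prop) (n : ℕ)
    (q' : (Fin (n + 1) → Bool) → X) : Prop :=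
  ∀ j : Fin (n + 1), C n (lowerFaceRestr q' j)

/-- `q` is a completion of the corner `q'`. -/
def IsNSCompletion {X : Type*} (C : ∀ n, ((Fin n → Bool) → X) → Prop) (n : ℕ)
    (q' q : (Fin (n + 1) → Bool) → X) : Prop :=
  C (n + 1) q ∧ ∀ v : Fin (n + 1) → Bool, v ≠ (fun _ => true) → q v = q' v

/-- The nilspace axioms: composition, ergodicity and corner completion. -/
def IsNilspace {X : Type*} (C : ∀ n, ((Fin n → Bool) → X) → Prop) : Prop :=
  (∀ (m n : ℕ) (φ : (Fin m → Bool) → (Fin n → Bool)), IsCubeMorphism φ →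
      ∀ q, C n q → C m (q ∘ φ)) ∧
  (∀ q : (Fin 1 → Bool) → X, C 1 q) ∧
  (∀ n (q' : (Fin (n + 1) → Bool) → X), IsNSCorner C n q' → ∃ q, IsNSCompletion C n q' q)

/-- A `k`-step nilspace: a nilspace in which every `(k+1)`-corner has a unique
completion. -/
def IsKStepNilspace {X : Type*} (C : ∀ n, ((Fin n → Bool) → X) → Prop) (k : ℕ) : Prop :=
  IsNilspace C ∧
  ∀ q' : (Fin (k + 1) → Bool) → X, IsNSCorner C k q' → ∃! q, IsNSCompletion C k q' q

/-- The Gray-code alternating product `σ_n`. -/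
def graySigma {G : Type*} [Group G] : (n : ℕ) → ((Fin n → Bool) → G) → G
  | 0, g => g (fun i => i.elim0)
  | n + 1, g => (graySigma n (fun v => g (Fin.snoc v true)))⁻¹ *
      graySigma n (fun v => g (Fin.snoc v false))

/-- The difference operator `∂_h g (x) = g(x)⁻¹ g(xh)`. -/
def mulDiff {H G : Type*} [Group H] [Group G] (h : H) (g : H → G) : H → G :=
  fun x => (g x)⁻¹ * g (x * h)

/-- `g : H → G` is a polynomial map adapted to the filtrations `H_•, G_•`. -/
def IsPolyMap {H G : Type*} [Group H] [Group G] (Hf : ℕ → Subgroup H)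
    (Gf : ℕ → Subgroup G) (g : H → G) : Prop :=
  ∀ (n : ℕ) (d : Fin n → ℕ) (h : Fin n → H), (∀ j, h j ∈ Hf (d j)) →
    ∀ x : H, ((List.ofFn h).foldr mulDiff g) x ∈ Gf (∑ j, d j)

/-- The `k`-arrow `⟨q_0, q_1⟩_k : {0,1}^{n+k} → X`. -/
def arrowMap {X : Type*} {n k : ℕ} (q0 q1 : (Fin n → Bool) → X) :
    (Fin (n + k) → Bool) → X :=
  fun v =>
    if ∀ j : Fin k, v (Fin.natAdd n j) = true
    then q1 (fun i => v (Fin.castAdd k i))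
    else q0 (fun i => v (Fin.castAdd k i))

/-! Cube morphisms pull faces back to faces (or to `∅`) of no larger codimension, because each
coordinate of a cube morphism is constant or a literal `u j` / `!u j`; this gives composition.
Splitting `{0,1}^{n+1}` along its first coordinate, `p ∈ C^{n+1}(G_•)` iff its lower layer `p₀`
lies in `C^n(G_•)` and `p₀⁻¹ * p₁` lies in `C^n(G_{•+1})`; the point is that `C^n(G_{•+1})` is
normalised by `C^n(G_•)`, by the commutator condition on the filtration. Corners are then
completed by induction on the dimension, completing the corner `p₀⁻¹ * p₁` for the shifted
filtration. The same recursion shows that a cube equal to `1` off the top vertex takes a value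
in `G_n` there, so `(k+1)`-corners have unique completions once `G_{k+1} = 1`. -/

section

open scoped Classical

variable {G : Type*} [Group G]

namespace IsGrpFiltration

variable {Gf : ℕ → Subgroup G}

lemma antitone (hGf : IsGrpFiltration Gf) {i j : ℕ} (hij : i ≤ j) : Gf j ≤ Gf i := by
  induction hij with
  | refl => exact le_rfl
  | step _ ih => exact (hGf.1 _).trans ih

lemma shift (hGf : IsGrpFiltration Gf) : IsGrpFiltration fun i => Gf (i + 1) :=
  ⟨fun _ => hGf.1 _, fun i j x hx y hy =>
    hGf.antitone (by omega) (hGf.2 (i + 1) (j + 1) x hx y hy)⟩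

end IsGrpFiltration

section Faces

variable {n : ℕ}

lemma faceEl_apply (F : Set (Fin n → Bool)) (g : G) (v : Fin n → Bool) :
    faceEl F g v = if v ∈ F then g else 1 := rfl

lemma faceEl_empty (g : G) : faceEl (∅ : Set (Fin n → Bool)) g = 1 := by
  funext v; simp [faceEl_apply]

lemma faceEl_mul (F : Set (Fin n → Bool)) (g h : G) :
    faceEl F g * faceEl F h = faceEl F (g * h) := by
  funext v; by_cases hv : v ∈ F <;> simp [faceEl_apply, hv]

lemma faceEl_inv (F : Set (Fin n → Bool)) (g : G) : (faceEl F g)⁻¹ = faceEl F g⁻¹ := by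
  funext v; by_cases hv : v ∈ F <;> simp [faceEl_apply, hv]

lemma IsFaceOfCodim.faceEl_mem_hkCubes {Gf : ℕ → Subgroup G} {c : ℕ} {F : Set (Fin n → Bool)}
    {g : G} (hF : IsFaceOfCodim F c) (hg : g ∈ Gf c) : faceEl F g ∈ hkCubes Gf n :=
  Subgroup.subset_closure ⟨c, F, g, hF, hg, rfl⟩

def IsEmptyOrFaceOfCodimLE (F : Set (Fin n → Bool)) (c : ℕ) : Prop :=
  F = ∅ ∨ ∃ c' ≤ c, IsFaceOfCodim F c'

lemma IsFaceOfCodim.isEmptyOrFaceOfCodimLE {F : Set (Fin n → Bool)} {c : ℕ}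
    (hF : IsFaceOfCodim F c) : IsEmptyOrFaceOfCodimLE F c :=
  Or.inr ⟨c, le_rfl, hF⟩

lemma isFaceOfCodim_univ : IsFaceOfCodim (Set.univ : Set (Fin n → Bool)) 0 :=
  ⟨∅, fun _ => false, rfl, by simp⟩

lemma isFaceOfCodim_coord (i : Fin n) (b : Bool) : IsFaceOfCodim {v : Fin n → Bool | v i = b} 1 :=
  ⟨{i}, fun _ => b, Finset.card_singleton i, by simp⟩

lemma IsFaceOfCodim.inter {F F' : Set (Fin n → Bool)} {c c' : ℕ}
    (hF : IsFaceOfCodim F c) (hF' : IsFaceOfCodim F' c') :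
    IsEmptyOrFaceOfCodimLE (F ∩ F') (c + c') := by
  obtain ⟨I, x, rfl, rfl⟩ := hF
  obtain ⟨I', x', rfl, rfl⟩ := hF'
  by_cases hcons : ∀ i ∈ I ∩ I', x i = x' i
  · refine Or.inr ⟨(I ∪ I').card, Finset.card_union_le I I', I ∪ I', I.piecewise x x', rfl, ?_⟩
    have hx : ∀ i ∈ I, I.piecewise x x' i = x i := fun i hi => I.piecewise_eq_of_mem x x' hi
    have hx' : ∀ i ∈ I', I.piecewise x x' i = x' i := fun i hi' => by
      by_cases hi : i ∈ I
      · rw [hx i hi, hcons i (Finset.mem_inter.2 ⟨hi, hi'⟩)]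
      · exact I.piecewise_eq_of_notMem x x' hi
    ext v
    simp only [Set.mem_inter_iff, Set.mem_ofPred_eq, Finset.forall_mem_union]
    exact and_congr (forall₂_congr fun i hi => by rw [hx i hi])
      (forall₂_congr fun i hi => by rw [hx' i hi])
  · push Not at hcons
    obtain ⟨i, hi, hne⟩ := hcons
    rw [Finset.mem_inter] at hi
    exact Or.inl (Set.eq_empty_of_forall_notMem fun v ⟨hv, hv'⟩ =>
      hne ((hv i hi.1).symm.trans (hv' i hi.2)))

lemma IsEmptyOrFaceOfCodimLE.inter {F F' : Set (Fin n → Bool)} {c c' : ℕ}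
    (hF : IsEmptyOrFaceOfCodimLE F c) (hF' : IsEmptyOrFaceOfCodimLE F' c') :
    IsEmptyOrFaceOfCodimLE (F ∩ F') (c + c') := by
  rcases hF with rfl | ⟨d, hd, hF⟩
  · exact Or.inl (Set.empty_inter _)
  rcases hF' with rfl | ⟨d', hd', hF'⟩
  · exact Or.inl (Set.inter_empty _)
  rcases hF.inter hF' with h | ⟨e, he, hface⟩
  · exact Or.inl h
  · exact Or.inr ⟨e, by omega, hface⟩

lemma IsEmptyOrFaceOfCodimLE.faceEl_mem_hkCubes {Gf : ℕ → Subgroup G} {c : ℕ}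
    {F : Set (Fin n → Bool)} (hF : IsEmptyOrFaceOfCodimLE F c) (hGf : IsGrpFiltration Gf) {g : G}
    (hg : g ∈ Gf c) :
    faceEl F g ∈ hkCubes Gf n := by
  rcases hF with rfl | ⟨c', hc', hF⟩
  · rw [faceEl_empty]; exact one_mem _
  · exact hF.faceEl_mem_hkCubes (hGf.antitone hc' hg)

end Faces

section CubeMorphisms

variable {m n : ℕ}

lemma eq_const_or_eq_xor_of_affine {b : (Fin m → Bool) → Bool} {a : Fin m → ℤ} {t : ℤ}
    (h : ∀ u, (if b u then 1 else 0 : ℤ) = t + ∑ j, (if u j then 1 else 0) * a j) :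
    (∃ c, ∀ u, b u = c) ∨ ∃ j c, ∀ u, b u = xor c (u j) := by
  have hinj : ∀ c c' : Bool, (if c then 1 else 0 : ℤ) = (if c' then 1 else 0) → c = c' := by
    decide
  have hbit : ∀ S : Finset (Fin m), 0 ≤ t + ∑ j ∈ S, a j ∧ t + ∑ j ∈ S, a j ≤ 1 := fun S => by
    have hS := h fun l => decide (l ∈ S)
    simp only [decide_eq_true_eq, boole_mul, Finset.sum_ite_mem, Finset.univ_inter] at hS
    rw [← hS]; split <;> norm_num
  by_cases hall : ∀ j, a j = 0
  · refine Or.inl ⟨b fun _ => false, fun u => hinj _ _ ?_⟩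
    simp only [h, hall, mul_zero, Finset.sum_const_zero]
  push Not at hall
  obtain ⟨j, hj⟩ := hall
  have h₀ := hbit ∅
  have hsj := hbit {j}
  rw [Finset.sum_empty] at h₀
  rw [Finset.sum_singleton] at hsj
  -- evaluating at the vertices `∅, {j}, {l}, {j, l}` leaves no room for a second nonzero `a l`
  have hother : ∀ l ≠ j, a l = 0 := by
    intro l hl
    have hsl := hbit {l}
    have hsjl := hbit {j, l}
    rw [Finset.sum_singleton] at hsl
    rw [Finset.sum_pair hl.symm] at hsjl
    omega
  have hsum : ∀ u : Fin m → Bool,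
      ∑ l, (if u l then 1 else 0) * a l = (if u j then 1 else 0) * a j :=
    fun u => Finset.sum_eq_single j (fun l _ hl => by rw [hother l hl, mul_zero])
      (fun hj => absurd (Finset.mem_univ j) hj)
  have ht : (if b (fun _ => false) then 1 else 0 : ℤ) = t := by
    rw [h, hsum, if_neg Bool.false_ne_true, zero_mul, add_zero]
  refine Or.inr ⟨j, b fun _ => false, fun u => hinj _ _ ?_⟩
  rw [h, hsum]
  revert ht
  cases b fun _ => false <;> cases u j <;>
    simp only [Bool.false_eq_true, ↓reduceIte, zero_mul, one_mul, add_zero, bne_self_eq_false,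
      Bool.bne_true, Bool.bne_false, Bool.not_false] <;> omega

lemma IsCubeMorphism.coord_eq {φ : (Fin m → Bool) → (Fin n → Bool)} (hφ : IsCubeMorphism φ)
    (i : Fin n) : (∃ c, ∀ u, φ u i = c) ∨ ∃ j c, ∀ u, φ u i = xor c (u j) := by
  obtain ⟨M, t, hM⟩ := hφ
  refine eq_const_or_eq_xor_of_affine
    (a := fun j => M (fun l => if j = l then 1 else 0) i) (t := t i) fun u => ?_
  have hu := congrFun (hM u) i
  rw [pi_eq_sum_univ (cubeEmb u), map_sum] at hu
  simp only [map_zsmul, Pi.add_apply, Finset.sum_apply, Pi.smul_apply, smul_eq_mul] at hu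
  rw [add_comm]
  exact hu

lemma IsCubeMorphism.preimage_coord {φ : (Fin m → Bool) → (Fin n → Bool)}
    (hφ : IsCubeMorphism φ) (i : Fin n) (b : Bool) :
    IsEmptyOrFaceOfCodimLE (φ ⁻¹' {v | v i = b}) 1 := by
  rcases hφ.coord_eq i with ⟨c, hc⟩ | ⟨j, c, hc⟩
  · by_cases hcb : c = b
    · refine Or.inr ⟨0, zero_le_one, ?_⟩
      convert isFaceOfCodim_univ
      ext u; simp [hc, hcb]
    · exact Or.inl (Set.eq_empty_of_forall_notMem fun u hu => hcb ((hc u).symm.trans hu))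
  · convert (isFaceOfCodim_coord j (xor c b)).isEmptyOrFaceOfCodimLE using 1
    ext u; simp only [Set.mem_preimage, Set.mem_ofPred_eq, hc]
    cases c <;> cases b <;> simp

lemma IsCubeMorphism.preimage_face {φ : (Fin m → Bool) → (Fin n → Bool)}
    (hφ : IsCubeMorphism φ) {F : Set (Fin n → Bool)} {c : ℕ} (hF : IsFaceOfCodim F c) :
    IsEmptyOrFaceOfCodimLE (φ ⁻¹' F) c := by
  obtain ⟨I, x, rfl, rfl⟩ := hF
  induction I using Finset.induction_on with
  | empty =>
    convert isFaceOfCodim_univ.isEmptyOrFaceOfCodimLE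
    · ext; simp
    · rfl
  | insert i I hi ih =>
    have hsplit : {v : Fin n → Bool | ∀ l ∈ insert i I, v l = x l} =
        {v | v i = x i} ∩ {v | ∀ l ∈ I, v l = x l} := by
      ext v; simp
    rw [hsplit, Set.preimage_inter, Finset.card_insert_of_notMem hi, add_comm]
    exact (hφ.preimage_coord i (x i)).inter ih

lemma hkCubes_comp_mem {Gf : ℕ → Subgroup G} (hGf : IsGrpFiltration Gf)
    {φ : (Fin m → Bool) → (Fin n → Bool)} (hφ : IsCubeMorphism φ)
    {q : (Fin n → Bool) → G} (hq : q ∈ hkCubes Gf n) : q ∘ φ ∈ hkCubes Gf m := by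
  induction hq using Subgroup.closure_induction with
  | mem f hf =>
    obtain ⟨c, F, g, hF, hg, rfl⟩ := hf
    exact (hφ.preimage_face hF).faceEl_mem_hkCubes hGf hg
  | one => exact one_mem _
  | mul _ _ _ _ hp hq => exact mul_mem hp hq
  | inv _ _ hp => exact inv_mem hp

end CubeMorphisms

section Layers

variable {n : ℕ} {X : Type*}

def layer (p : (Fin (n + 1) → Bool) → X) (b : Bool) : (Fin n → Bool) → X :=
  fun w => p (Fin.cons b w)

def stack (p₀ p₁ : (Fin n → Bool) → X) : (Fin (n + 1) → Bool) → X :=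
  fun v => if v 0 then p₁ (Fin.tail v) else p₀ (Fin.tail v)

@[simp]
lemma layer_stack (p₀ p₁ : (Fin n → Bool) → X) (b : Bool) :
    layer (stack p₀ p₁) b = if b then p₁ else p₀ := by
  funext w; cases b <;> simp [layer, stack]

lemma stack_layer (p : (Fin (n + 1) → Bool) → X) : stack (layer p false) (layer p true) = p := by
  funext v
  simp only [stack, layer]
  cases h : v 0 <;> simp only [Bool.false_eq_true, if_false, if_true] <;>
    rw [← h, Fin.cons_self_tail]

lemma layer_false_eq_lowerFaceRestr_zero (p : (Fin (n + 1) → Bool) → X) :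
    layer p false = lowerFaceRestr p 0 := by
  funext w; simp [layer, lowerFaceRestr, Fin.insertNth_zero']

lemma cons_eq_top_iff (b : Bool) (w : Fin n → Bool) :
    (Fin.cons b w : Fin (n + 1) → Bool) = (fun _ => true) ↔ b = true ∧ w = fun _ => true := by
  simp [funext_iff, Fin.forall_fin_succ]

lemma stack_mul (p₀ p₁ p₀' p₁' : (Fin n → Bool) → G) :
    stack (p₀ * p₀') (p₁ * p₁') = stack p₀ p₁ * stack p₀' p₁' := by
  funext v; simp only [stack, Pi.mul_apply]; split <;> rfl

lemma stack_one : stack (1 : (Fin n → Bool) → G) 1 = 1 := by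
  funext v; simp [stack]

lemma stack_inv (p₀ p₁ : (Fin n → Bool) → G) : stack p₀⁻¹ p₁⁻¹ = (stack p₀ p₁)⁻¹ := by
  funext v; simp only [stack, Pi.inv_apply]; split <;> rfl

lemma layer_one (b : Bool) : layer (1 : (Fin (n + 1) → Bool) → G) b = 1 := rfl

lemma layer_mul (p q : (Fin (n + 1) → Bool) → G) (b : Bool) :
    layer (p * q) b = layer p b * layer q b := rfl

lemma layer_inv (p : (Fin (n + 1) → Bool) → G) (b : Bool) : layer p⁻¹ b = (layer p b)⁻¹ := rfl

lemma isCubeMorphism_tail : IsCubeMorphism (Fin.tail : (Fin (n + 1) → Bool) → Fin n → Bool) :=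
  ⟨(LinearMap.funLeft ℤ ℤ Fin.succ).toAddMonoidHom, 0, fun _ => (add_zero _).symm⟩

end Layers

section Recursion

variable {n : ℕ} {Gf : ℕ → Subgroup G}

lemma stack_self_mem (hGf : IsGrpFiltration Gf) {p : (Fin n → Bool) → G}
    (hp : p ∈ hkCubes Gf n) : stack p p ∈ hkCubes Gf (n + 1) := by
  have : stack p p = p ∘ Fin.tail := by funext v; simp [stack]
  exact this ▸ hkCubes_comp_mem hGf isCubeMorphism_tail hp

lemma stack_one_mem {d : (Fin n → Bool) → G} (hd : d ∈ hkCubes (fun i => Gf (i + 1)) n) :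
    stack 1 d ∈ hkCubes Gf (n + 1) := by
  induction hd using Subgroup.closure_induction with
  | mem f hf =>
    obtain ⟨c, F, g, ⟨I, x, rfl, rfl⟩, hg, rfl⟩ := hf
    have hface : IsFaceOfCodim {v : Fin (n + 1) → Bool | v 0 = true ∧ Fin.tail v ∈
        {w : Fin n → Bool | ∀ i ∈ I, w i = x i}} (I.card + 1) := by
      refine ⟨insert 0 (I.map (Fin.succEmb n)), Fin.cons true x, ?_, ?_⟩
      · rw [Finset.card_insert_of_notMem (by simp [Fin.succ_ne_zero]), Finset.card_map]
      · ext v; simp [Fin.tail]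
    convert hface.faceEl_mem_hkCubes hg using 1
    funext v
    simp only [stack, faceEl_apply, Pi.one_apply, Set.mem_ofPred_eq]
    split_ifs <;> simp_all
  | one => rw [stack_one]; exact one_mem _
  | mul _ _ _ _ hp hq => simpa [← stack_mul] using mul_mem hp hq
  | inv _ _ hp => simpa [← stack_inv] using inv_mem hp

lemma layer_faceEl (I : Finset (Fin (n + 1))) (x : Fin (n + 1) → Bool) (g : G) (b : Bool) :
    layer (faceEl {v | ∀ i ∈ I, v i = x i} g) b =
      faceEl {w | ∀ i ∈ Finset.univ.filter (fun i : Fin n => i.succ ∈ I), w i = x i.succ}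
        (if 0 ∈ I → b = x 0 then g else 1) := by
  funext w
  simp only [layer, faceEl_apply, Set.mem_ofPred_eq, Fin.forall_fin_succ, Fin.cons_zero,
    Fin.cons_succ, Finset.mem_filter, Finset.mem_univ, true_and]
  split_ifs <;> tauto

lemma card_eq_card_filter_succ (I : Finset (Fin (n + 1))) :
    I.card = if 0 ∈ I then (Finset.univ.filter fun i : Fin n => i.succ ∈ I).card + 1
      else (Finset.univ.filter fun i : Fin n => i.succ ∈ I).card := by
  simpa using Fin.card_filter_univ_succ (· ∈ I)

lemma faceEl_conj_mem (hGf : IsGrpFiltration Gf) {c' : ℕ} {F' : Set (Fin n → Bool)} {g' : G}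
    (hF' : IsFaceOfCodim F' c') (hg' : g' ∈ Gf c') {b : (Fin n → Bool) → G}
    (hb : b ∈ hkCubes (fun i => Gf (i + 1)) n) :
    faceEl F' g' * b * (faceEl F' g')⁻¹ ∈ hkCubes (fun i => Gf (i + 1)) n := by
  suffices hkCubes (fun i => Gf (i + 1)) n ≤
      (hkCubes (fun i => Gf (i + 1)) n).comap (MulAut.conj (faceEl F' g')).toMonoidHom from
    this hb
  refine (Subgroup.closure_le _).2 ?_
  rintro _ ⟨c, F, g, hF, hg, rfl⟩
  have hconj : faceEl F' g' * faceEl F g * (faceEl F' g')⁻¹ =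
      faceEl F g * faceEl (F ∩ F') (g⁻¹ * g' * g * g'⁻¹) := by
    funext v
    by_cases hv : v ∈ F <;> by_cases hv' : v ∈ F' <;> simp [faceEl_apply, hv, hv', mul_assoc]
  have hcomm : g⁻¹ * g' * g * g'⁻¹ ∈ Gf (c + c' + 1) := by
    have := hGf.2 (c + 1) c' g hg g'⁻¹ (inv_mem hg')
    rw [inv_inv, Nat.add_right_comm] at this
    exact this
  simp only [Subgroup.coe_comap, Set.mem_preimage, SetLike.mem_coe, MulEquiv.coe_toMonoidHom,
    MulAut.conj_apply, hconj]
  exact mul_mem (hF.faceEl_mem_hkCubes hg)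
    ((hF.inter hF').faceEl_mem_hkCubes hGf.shift hcomm)

lemma hkCubes_le_normalizer_shift (hGf : IsGrpFiltration Gf) :
    hkCubes Gf n ≤ Subgroup.normalizer (hkCubes (fun i => Gf (i + 1)) n : Set _) := by
  refine (Subgroup.closure_le _).2 ?_
  rintro _ ⟨c, F, g, hF, hg, rfl⟩
  refine Subgroup.mem_normalizer_iff.2 fun b => ⟨faceEl_conj_mem hGf hF hg, fun hb => ?_⟩
  have := faceEl_conj_mem hGf hF (inv_mem hg) hb
  rwa [← faceEl_inv, inv_inv, ← mul_assoc, ← mul_assoc, inv_mul_cancel, one_mul,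
    inv_mul_cancel_right] at this

lemma layer_faceEl_mem (hGf : IsGrpFiltration Gf) {c : ℕ} {F : Set (Fin (n + 1) → Bool)} {g : G}
    (hF : IsFaceOfCodim F c) (hg : g ∈ Gf c) :
    layer (faceEl F g) false ∈ hkCubes Gf n ∧
      (layer (faceEl F g) false)⁻¹ * layer (faceEl F g) true ∈ hkCubes (fun i => Gf (i + 1)) n := by
  obtain ⟨I, x, rfl, rfl⟩ := hF
  set I' := Finset.univ.filter fun i : Fin n => i.succ ∈ I
  have hface : IsFaceOfCodim {w : Fin n → Bool | ∀ i ∈ I', w i = x i.succ} I'.card :=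
    ⟨I', _, rfl, rfl⟩
  have hcard : I.card = if 0 ∈ I then I'.card + 1 else I'.card := card_eq_card_filter_succ I
  rw [layer_faceEl, layer_faceEl, faceEl_inv, faceEl_mul]
  refine ⟨hface.faceEl_mem_hkCubes ?_, hface.faceEl_mem_hkCubes ?_⟩
  · split_ifs
    · exact hGf.antitone (by split_ifs at hcard <;> omega) hg
    · exact one_mem _
  · by_cases h0 : 0 ∈ I
    · rw [if_pos h0] at hcard
      have hgb : ∀ b : Bool, (if 0 ∈ I → b = x 0 then g else 1) ∈ Gf (I'.card + 1) := by
        intro b; split_ifs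
        exacts [hcard ▸ hg, one_mem _]
      exact mul_mem (inv_mem (hgb false)) (hgb true)
    · simp only [h0, false_implies, if_true, inv_mul_cancel]
      exact one_mem _

lemma layer_mem_of_mem_hkCubes_succ (hGf : IsGrpFiltration Gf)
    {p : (Fin (n + 1) → Bool) → G} (hp : p ∈ hkCubes Gf (n + 1)) :
    layer p false ∈ hkCubes Gf n ∧
      (layer p false)⁻¹ * layer p true ∈ hkCubes (fun i => Gf (i + 1)) n := by
  induction hp using Subgroup.closure_induction with
  | mem f hf =>
    obtain ⟨c, F, g, hF, hg, rfl⟩ := hf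
    exact layer_faceEl_mem hGf hF hg
  | one =>
    rw [layer_one, layer_one, inv_one, one_mul]
    exact ⟨one_mem _, one_mem _⟩
  | mul p q _ _ hp hq =>
    obtain ⟨hp₀, hpΔ⟩ := hp
    obtain ⟨hq₀, hqΔ⟩ := hq
    refine ⟨layer_mul p q false ▸ mul_mem hp₀ hq₀, ?_⟩
    have hconj := (Subgroup.mem_normalizer_iff.1
      (hkCubes_le_normalizer_shift hGf (inv_mem hq₀)) _).1 hpΔ
    -- `(pq)₀⁻¹ (pq)₁ = q₀⁻¹ (p₀⁻¹ p₁) q₀ * q₀⁻¹ q₁`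
    rw [layer_mul, layer_mul]
    convert mul_mem hconj hqΔ using 1
    group
  | inv p _ hp =>
    obtain ⟨hp₀, hpΔ⟩ := hp
    refine ⟨layer_inv p false ▸ inv_mem hp₀, ?_⟩
    have hconj := (Subgroup.mem_normalizer_iff.1
      (hkCubes_le_normalizer_shift hGf hp₀) _).1 (inv_mem hpΔ)
    rw [layer_inv, layer_inv]
    convert hconj using 1
    group

lemma mem_hkCubes_succ_iff (hGf : IsGrpFiltration Gf) (p : (Fin (n + 1) → Bool) → G) :
    p ∈ hkCubes Gf (n + 1) ↔ layer p false ∈ hkCubes Gf n ∧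
      (layer p false)⁻¹ * layer p true ∈ hkCubes (fun i => Gf (i + 1)) n := by
  refine ⟨layer_mem_of_mem_hkCubes_succ hGf, fun ⟨h₀, hΔ⟩ => ?_⟩
  have hp : p = stack (layer p false) (layer p false) *
      stack 1 ((layer p false)⁻¹ * layer p true) := by
    rw [← stack_mul, mul_one, mul_inv_cancel_left, stack_layer]
  rw [hp]
  exact mul_mem (stack_self_mem hGf h₀) (stack_one_mem hΔ)

end Recursion

section NilspaceAxioms

variable {n : ℕ} {Gf : ℕ → Subgroup G}

lemma mem_hkCubes_one (h1 : Gf 1 = ⊤) (q : (Fin 1 → Bool) → G) : q ∈ hkCubes Gf 1 := by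
  have hq : q = faceEl {v | v 0 = false} (q fun _ => false) *
      faceEl {v | v 0 = true} (q fun _ => true) := by
    funext v
    obtain ⟨b, rfl⟩ : ∃ b, v = fun _ => b := ⟨v 0, funext fun i => by rw [Subsingleton.elim i 0]⟩
    cases b <;> simp [faceEl_apply]
  rw [hq]
  exact mul_mem ((isFaceOfCodim_coord 0 false).faceEl_mem_hkCubes (h1 ▸ Subgroup.mem_top _))
    ((isFaceOfCodim_coord 0 true).faceEl_mem_hkCubes (h1 ▸ Subgroup.mem_top _))

lemma stack_completion (hGf : IsGrpFiltration Gf) {q' : (Fin (n + 1) → Bool) → G}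
    (h₀ : layer q' false ∈ hkCubes Gf n) {r : (Fin n → Bool) → G}
    (hr : r ∈ hkCubes (fun i => Gf (i + 1)) n)
    (hrq' : ∀ w, w ≠ (fun _ => true) → r w = (layer q' false w)⁻¹ * layer q' true w) :
    stack (layer q' false) (layer q' false * r) ∈ hkCubes Gf (n + 1) ∧
      ∀ v, v ≠ (fun _ => true) → stack (layer q' false) (layer q' false * r) v = q' v := by
  refine ⟨(mem_hkCubes_succ_iff hGf _).2 (by simpa using ⟨h₀, hr⟩), fun v hv => ?_⟩
  conv_rhs => rw [← stack_layer q']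
  simp only [stack, Pi.mul_apply]
  split_ifs with hv0
  · have htail : Fin.tail v ≠ fun _ => true := fun h =>
      hv (by rw [← Fin.cons_self_tail v, cons_eq_top_iff]; exact ⟨hv0, h⟩)
    rw [hrq' _ htail, mul_inv_cancel_left]
  · rfl

lemma exists_completion (hGf : IsGrpFiltration Gf) {q' : (Fin (n + 1) → Bool) → G}
    (hq' : ∀ j, lowerFaceRestr q' j ∈ hkCubes Gf n) :
    ∃ q ∈ hkCubes Gf (n + 1), ∀ v, v ≠ (fun _ => true) → q v = q' v := by
  induction n generalizing Gf with
  | zero =>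
    exact ⟨_, stack_completion hGf (layer_false_eq_lowerFaceRestr_zero q' ▸ hq' 0) (one_mem _)
      fun w hw => absurd (funext fun i => i.elim0) hw⟩
  | succ n ih =>
    have hcorner : ∀ j, lowerFaceRestr ((layer q' false)⁻¹ * layer q' true) j ∈
        hkCubes (fun i => Gf (i + 1)) n := by
      intro j
      convert ((mem_hkCubes_succ_iff hGf _).1 (hq' j.succ)).2 using 1
      funext w; simp [layer, lowerFaceRestr]
    obtain ⟨r, hr, hrq'⟩ := ih hGf.shift hcorner
    exact ⟨_, stack_completion hGf (layer_false_eq_lowerFaceRestr_zero q' ▸ hq' 0) hr hrq'⟩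

lemma apply_mem_of_mem_hkCubes (hGf : IsGrpFiltration Gf) {q : (Fin n → Bool) → G}
    (hq : q ∈ hkCubes Gf n) (v : Fin n → Bool) : q v ∈ Gf 0 := by
  induction hq using Subgroup.closure_induction with
  | mem f hf =>
    obtain ⟨c, F, g, -, hg, rfl⟩ := hf
    rw [faceEl_apply]
    split_ifs
    exacts [hGf.antitone c.zero_le hg, one_mem _]
  | one => exact one_mem _
  | mul _ _ _ _ hp hq => exact mul_mem hp hq
  | inv _ _ hp => exact inv_mem hp

lemma apply_top_mem_of_mem_hkCubes (hGf : IsGrpFiltration Gf) {e : (Fin n → Bool) → G}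
    (he : e ∈ hkCubes Gf n) (he₁ : ∀ v, v ≠ (fun _ => true) → e v = 1) :
    e (fun _ => true) ∈ Gf n := by
  induction n generalizing Gf with
  | zero => exact apply_mem_of_mem_hkCubes hGf he _
  | succ n ih =>
    have hlow : layer e false = 1 :=
      funext fun w => he₁ _ fun h => by simp [cons_eq_top_iff] at h
    have hup := ((mem_hkCubes_succ_iff hGf e).1 he).2
    rw [hlow, inv_one, one_mul] at hup
    have := ih hGf.shift hup fun w hw => he₁ _ fun h => hw ((cons_eq_top_iff _ _).1 h).2
    rwa [layer, (cons_eq_top_iff _ _).2 ⟨rfl, rfl⟩] at this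

lemma eq_of_mem_hkCubes_of_eqOn_ne_top (hGf : IsGrpFiltration Gf) (hn : Gf n = ⊥)
    {q q₂ : (Fin n → Bool) → G} (hq : q ∈ hkCubes Gf n) (hq₂ : q₂ ∈ hkCubes Gf n)
    (h : ∀ v, v ≠ (fun _ => true) → q v = q₂ v) : q = q₂ := by
  have htop := apply_top_mem_of_mem_hkCubes hGf (mul_mem (inv_mem hq) hq₂)
    fun v hv => by simp [h v hv]
  rw [hn, Subgroup.mem_bot, Pi.mul_apply, Pi.inv_apply, inv_mul_eq_one] at htop
  funext v
  by_cases hv : v = fun _ => true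
  · exact hv ▸ htop
  · exact h v hv

end NilspaceAxioms

end

theorem stmt6_general {G : Type*} [Group G] (Gf : ℕ → Subgroup G) (hGf : IsGrpFiltration Gf)
    (h1 : Gf 1 = ⊤) {k : ℕ} (hk : Gf (k + 1) = ⊥) :
    IsKStepNilspace (fun n q => q ∈ hkCubes Gf n) k := by
  refine ⟨⟨fun _ _ _ hφ _ hq => hkCubes_comp_mem hGf hφ hq, mem_hkCubes_one h1,
    fun _ _ hq' => exists_completion hGf hq'⟩, fun q' hq' => ?_⟩
  obtain ⟨q, hq, hqq'⟩ := exists_completion hGf hq'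
  exact ⟨q, ⟨hq, hqq'⟩, fun q₂ ⟨hq₂, hq₂q'⟩ => eq_of_mem_hkCubes_of_eqOn_ne_top hGf hk hq₂ hq
    fun v hv => (hq₂q' v hv).trans (hqq' v hv).symm⟩

theorem stmt6 {G : Type*} [Group G] (Gf : ℕ → Subgroup G) (hGf : IsGrpFiltration Gf)
    (h0 : Gf 0 = ⊤) (h1 : Gf 1 = ⊤) {k : ℕ} (hk : Gf (k + 1) = ⊥)
    (hmin : ∀ j : ℕ, Gf (j + 1) = ⊥ → k ≤ j) :
    IsKStepNilspace (fun n q => q ∈ hkCubes Gf n) k :=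
  stmt6_general Gf hGf h1 hk
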